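/- With π(y) = π_ref(y)·exp(r(y)/β)/Z as the RLHF-optimal policy (Z the normalizing constant), the reward can be recovered up to an additive constant: r(y) = β·log(π(y)/π_ref(y)) + β·log Z for all y ∈ Y. Consequently, for any y⁺, y⁻: r(y⁺) − r(y⁻) = β·(log(π(y⁺)/π_ref(y⁺)) − log(π(y⁻)/π_ref(y⁻))). -/

import Mathlib

open Finset

/-! The Gibbs form `π = π_ref · exp (r / β) / Z` makes `log (π / π_ref)` equal to `r / β - log Z`;
multiplying by `β` recovers `r` up to the constant `β · log Z`, which cancels in differences. -/

lemma sum_mul_exp_pos {Y : Type*} [Fintype Y] [Nonempty Y] {w : Y → ℝ} (hw : ∀ y, 0 < w y)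
    (f : Y → ℝ) : 0 < ∑ y, w y * Real.exp (f y) :=
  Finset.sum_pos (fun y _ => mul_pos (hw y) (Real.exp_pos _)) univ_nonempty

lemma log_div_eq_sub_log_of_eq_mul_exp_div {p q s Z : ℝ} (hq : q ≠ 0) (hZ : Z ≠ 0)
    (hp : p = q * Real.exp s / Z) : Real.log (p / q) = s - Real.log Z := by
  rw [hp, div_right_comm, mul_div_cancel_left₀ _ hq, Real.log_div (Real.exp_ne_zero _) hZ,
    Real.log_exp]

/-- Reward recovery up to an additive constant from the RLHF-optimal policy:
`r(y) = β·log(π(y)/π_ref(y)) + β·log Z`, and hence the reward difference equals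
`β` times the difference of log-ratios. -/
theorem reward_recovery (Y : Type*) [Fintype Y]
    (πref : Y → ℝ) (hπref : ∀ y, 0 < πref y)
    (r : Y → ℝ) (β : ℝ) (hβ : 0 < β)
    (Z : ℝ) (hZ : Z = ∑ y, πref y * Real.exp (r y / β))
    (π : Y → ℝ) (hπ : ∀ y, π y = πref y * Real.exp (r y / β) / Z) :
    (∀ y, r y = β * Real.log (π y / πref y) + β * Real.log Z)
      ∧ ∀ yp ym : Y, r yp - r ym =
          β * (Real.log (π yp / πref yp) - Real.log (π ym / πref ym)) := by
  have recover : ∀ y, r y = β * Real.log (π y / πref y) + β * Real.log Z := by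
    intro y
    have : Nonempty Y := ⟨y⟩
    have hZpos : 0 < Z := hZ ▸ sum_mul_exp_pos hπref _
    rw [log_div_eq_sub_log_of_eq_mul_exp_div (hπref y).ne' hZpos.ne' (hπ y), mul_sub,
      mul_div_cancel₀ _ hβ.ne', sub_add_cancel]
  exact ⟨recover, fun yp ym => by rw [recover yp, recover ym]; ring⟩
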